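/- arXiv:1903.06552 — 3 statements merged into one kernel-verified Lean document; each statement's English description precedes it below -/
import Mathlib

section
/- Let A be a p×p symmetric positive definite real matrix, β ∈ ℝ^p, σ > 0 and n a positive integer. Let V be the (p+1)×(p+1) block matrix V = σ² [[4βᵀAβ + 2nσ², 2βᵀ], [2β, A⁻¹]]. Then V is invertible and V⁻¹ = (1/σ²) [[1/(2nσ²), −(1/(nσ²))βᵀA], [−(1/(nσ²))Aβ, (I + (2/(nσ²)) A β βᵀ) A]]. -/
/-!
Up to the factor `σ²`, `V` is bordered by the invertible block `A⁻¹`. Its Schur complement with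
respect to that block is the scalar `4 βᵀAβ + 2nσ² - (2β)ᵀ A (2β) = 2nσ² ≠ 0`, so block inversion
applies and produces the stated blocks.
-/

open Matrix

noncomputable section

namespace Matrix

variable {n : Type*} [Fintype n] [DecidableEq n]

theorem isUnit_and_inv_fromBlocks_nonsing_inv₂₂ {α m : Type*} [CommRing α] [Fintype m]
    [DecidableEq m] (a : Matrix m m α) (B : Matrix m n α) (C : Matrix n m α) {A : Matrix n n α}
    (hA : IsUnit A) (hS : IsUnit (a - B * A * C)) :
    IsUnit (fromBlocks a B C A⁻¹) ∧
    (fromBlocks a B C A⁻¹)⁻¹ =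
      fromBlocks (a - B * A * C)⁻¹ (-((a - B * A * C)⁻¹ * B * A))
        (-(A * C * (a - B * A * C)⁻¹)) (A + A * C * (a - B * A * C)⁻¹ * B * A) := by
  let := hA.invertible
  have hinvOf : ⅟(A⁻¹) = A := by rw [invOf_eq_nonsing_inv, inv_inv_of_invertible]
  rw [← hinvOf] at hS
  let := hS.invertible
  let := fromBlocks₂₂Invertible a B C A⁻¹
  refine ⟨isUnit_of_invertible _, ?_⟩
  rw [← invOf_eq_nonsing_inv, invOf_fromBlocks₂₂_eq, invOf_eq_nonsing_inv, hinvOf]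

theorem of_const_eq_smul_one {ι R : Type*} [Unique ι] [DecidableEq ι] [Semiring R] (x : R) :
    (of fun _ _ => x : Matrix ι ι R) = x • 1 := by
  ext i j
  simp [Subsingleton.elim i j]

theorem isUnit_and_inv_fromBlocks_bordered {K ι : Type*} [Field K] [Unique ι] [DecidableEq ι]
    (a : K) (u v : n → K) {A : Matrix n n K} (hA : IsUnit A) (hs : a - v ⬝ᵥ A *ᵥ u ≠ 0) :
    IsUnit (fromBlocks (of fun _ _ => a : Matrix ι ι K) (replicateRow ι v) (replicateCol ι u) A⁻¹) ∧
    (fromBlocks (of fun _ _ => a : Matrix ι ι K) (replicateRow ι v) (replicateCol ι u) A⁻¹)⁻¹ =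
      fromBlocks (of fun _ _ => (a - v ⬝ᵥ A *ᵥ u)⁻¹)
        (-(a - v ⬝ᵥ A *ᵥ u)⁻¹ • replicateRow ι (v ᵥ* A))
        (-(a - v ⬝ᵥ A *ᵥ u)⁻¹ • replicateCol ι (A *ᵥ u))
        (A + (a - v ⬝ᵥ A *ᵥ u)⁻¹ • vecMulVec (A *ᵥ u) (v ᵥ* A)) := by
  set s := a - v ⬝ᵥ A *ᵥ u
  have hschur : (of fun _ _ => a : Matrix ι ι K) - replicateRow ι v * A * replicateCol ι u =
      s • 1 := by
    rw [Matrix.mul_assoc, ← replicateCol_mulVec, replicateRow_mul_replicateCol]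
    ext i j
    simp [s, Subsingleton.elim i j]
  have hmul : (s • 1 : Matrix ι ι K) * (s⁻¹ • 1) = 1 := by
    rw [smul_mul_smul_comm, mul_inv_cancel₀ hs, Matrix.one_mul, one_smul]
  have hS : IsUnit ((of fun _ _ => a : Matrix ι ι K) - replicateRow ι v * A * replicateCol ι u) :=
    hschur ▸ .of_mul_eq_one _ hmul
  obtain ⟨hunit, hinv⟩ := isUnit_and_inv_fromBlocks_nonsing_inv₂₂ _ _ _ hA hS
  refine ⟨hunit, ?_⟩
  rw [hinv, hschur, inv_eq_right_inv hmul, of_const_eq_smul_one, vecMulVec_eq ι]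
  simp only [smul_mul, Matrix.one_mul, Matrix.mul_smul, Matrix.mul_one, Matrix.mul_assoc, neg_smul,
    ← replicateRow_vecMul, ← replicateCol_mulVec]

end Matrix

/-- explicit inverse of the block matrix
`V = σ² [[4βᵀAβ + 2nσ², 2βᵀ], [2β, A⁻¹]]`. -/
theorem block_matrix_inverse {p : ℕ} (A : Matrix (Fin p) (Fin p) ℝ) (hA : A.PosDef)
    (β : Fin p → ℝ) (σ : ℝ) (hσ : 0 < σ) (n : ℕ) (hn : 0 < n)
    (V : Matrix (Fin 1 ⊕ Fin p) (Fin 1 ⊕ Fin p) ℝ)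
    (hV : V = σ ^ 2 •
      Matrix.fromBlocks
        (Matrix.of fun _ _ => 4 * (β ⬝ᵥ A.mulVec β) + 2 * n * σ ^ 2)
        (Matrix.of fun _ j => 2 * β j)
        (Matrix.of fun i _ => 2 * β i)
        A⁻¹) :
    IsUnit V ∧
    V⁻¹ = (σ ^ 2)⁻¹ •
      Matrix.fromBlocks
        (Matrix.of fun _ _ => 1 / (2 * n * σ ^ 2))
        (Matrix.of fun _ j => -(1 / (n * σ ^ 2)) * Matrix.vecMul β A j)
        (Matrix.of fun i _ => -(1 / (n * σ ^ 2)) * A.mulVec β i)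
        ((1 + (2 / (n * σ ^ 2)) • Matrix.vecMulVec (A.mulVec β) β) * A) := by
  have hσ2 : σ ^ 2 ≠ 0 := by positivity
  have hn' : (n : ℝ) ≠ 0 := by positivity
  have hschur : 4 * (β ⬝ᵥ A *ᵥ β) + 2 * n * σ ^ 2 - ((2 : ℝ) • β) ⬝ᵥ A *ᵥ ((2 : ℝ) • β) =
      2 * n * σ ^ 2 := by
    simp only [mulVec_smul, dotProduct_smul, smul_dotProduct]
    ring
  obtain ⟨hunit, hinv⟩ := isUnit_and_inv_fromBlocks_bordered (ι := Fin 1) _ ((2 : ℝ) • β)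
    ((2 : ℝ) • β) ((isUnit_iff_isUnit_det _).mpr hA.det_pos.ne'.isUnit) (by rw [hschur]; positivity)
  rw [hschur] at hinv
  replace hV : V = σ ^ 2 • fromBlocks (of fun _ _ => 4 * (β ⬝ᵥ A *ᵥ β) + 2 * n * σ ^ 2)
      (replicateRow (Fin 1) ((2 : ℝ) • β)) (replicateCol (Fin 1) ((2 : ℝ) • β)) A⁻¹ := hV
  subst hV
  let := invertibleOfNonzero hσ2
  refine ⟨(isUnit_smul_iff (Units.mk0 _ hσ2) _).mpr hunit,
    (inv_smul _ (σ ^ 2) ((isUnit_iff_isUnit_det _).mp hunit)).trans ?_⟩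
  rw [hinv, invOf_eq_inv, mulVec_smul, smul_vecMul]
  congr 2
  · ext
    simp [one_div]
  · ext
    simp only [Matrix.smul_apply, replicateRow_apply, Pi.smul_apply, of_apply, smul_eq_mul]
    field_simp
  · ext
    simp only [Matrix.smul_apply, replicateCol_apply, Pi.smul_apply, of_apply, smul_eq_mul]
    field_simp
  · rw [add_mul, one_mul, smul_mul, vecMulVec_mul, vecMulVec_smul, smul_vecMulVec, smul_smul,
      smul_smul]
    congr 2
    field_simp
end
end

section
/- For ρ ∈ (−1, 1) and γ ∈ ℝ, define CP_delta(γ, ρ) = ∫₀^∞ ∫_{−∞}^{∞} Ψ(ℓ(y+γ, w, ρ), u(y+γ, w, ρ); ρy, 1−ρ²) φ(y) dy f_W(w) dw, where ℓ(h, w, ρ) = −w t_m(α) r_delta(h/w) + w ρ k_m(h/w), u(h, w, ρ) = w t_m(α) r_delta(h/w) + w ρ k_m(h/w), and Ψ(ℓ, u; μ, v) = P(ℓ ≤ Z ≤ u) for Z ~ N(μ, v). Then CP_delta is an even function of γ for each fixed ρ and an even function of ρ for each fixed γ: CP_delta(−γ, ρ) = CP_delta(γ, ρ) and CP_delta(γ,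 −ρ) = CP_delta(γ, ρ). -/
open MeasureTheory ProbabilityTheory Matrix Set Filter

noncomputable section

/-- The standard normal probability density function `φ`. -/
def phiPdf (x : ℝ) : ℝ := (Real.sqrt (2 * Real.pi))⁻¹ * Real.exp (-(x ^ 2) / 2)

/-- The standard normal cumulative distribution function `Φ`. -/
def PhiCdf (x : ℝ) : ℝ := ∫ u in Iic x, phiPdf u

/-- The density `f_W` of `W = σ̂/σ`, i.e. of `(Q/m)^{1/2}` for `Q ~ χ²_m`. -/
def fW (m : ℕ) (w : ℝ) : ℝ :=
  (2 / Real.Gamma ((m : ℝ) / 2)) * ((m : ℝ) / 2) ^ ((m : ℝ) / 2) * w ^ ((m : ℝ) - 1) *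
    Real.exp (-(m : ℝ) * w ^ 2 / 2)

/-- `IsTQuantile m a t` says that `t` is the `1 - a/2` quantile of the Student `t`
distribution with `m` degrees of freedom, characterized by `P(Z ≤ t W₀) = 1 - a/2`
for `Z ~ N(0,1)` independent of `W₀ = (Q/m)^{1/2}`, `Q ~ χ²_m`. -/
def IsTQuantile (m : ℕ) (a t : ℝ) : Prop :=
  ∫ w in Ioi (0 : ℝ), PhiCdf (t * w) * fW m w = 1 - a / 2

/-- The function `k_m` (with `d = d_m = t_m(α̃)` supplied as a parameter). -/
def km (m : ℕ) (d γ : ℝ) : ℝ :=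
  ∫ w in Ioi (0 : ℝ),
    (phiPdf (d * w + γ) - phiPdf (d * w - γ) +
      γ * (PhiCdf (d * w - γ) - PhiCdf (-(d * w) - γ))) * fW m w

/-- The function `q_m`. -/
def qm (m : ℕ) (d γ : ℝ) : ℝ :=
  ∫ w in Ioi (0 : ℝ),
    (-(d * w) * phiPdf (d * w + γ) - d * w * phiPdf (d * w - γ) +
      PhiCdf (d * w - γ) - PhiCdf (-(d * w) - γ)) * fW m w

/-- The function `h_m`. -/
def hm (m : ℕ) (d γ : ℝ) : ℝ :=
  ∫ w in Ioi (0 : ℝ),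
    ((d * w) ^ 2 * phiPdf (d * w + γ) - (d * w) ^ 2 * phiPdf (d * w - γ)) * fW m w

/-- The function `r_delta` (depending on `ρ` through `ρ²` only). -/
def rdelta (m n : ℕ) (d ρ γ : ℝ) : ℝ :=
  Real.sqrt (ρ ^ 2 / (2 * n) * (km m d γ + hm m d γ - γ * qm m d γ) ^ 2 +
    1 - 2 * ρ ^ 2 * qm m d γ + ρ ^ 2 * (qm m d γ) ^ 2)

/-- `Ψ(l, u; μ, v) = P(l ≤ Z ≤ u)` for `Z ~ N(μ, v)`. -/
def Psi (l u μ v : ℝ) : ℝ := (gaussianReal μ v.toNNReal (Icc l u)).toReal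

/- ### Auxiliary lemmas -/

lemma phiPdf_neg (x : ℝ) : phiPdf (-x) = phiPdf x := by simp [phiPdf, neg_sq]

lemma integrable_phiPdf : Integrable phiPdf := by
  have h := (integrable_exp_neg_mul_sq (by norm_num : (0:ℝ) < 1/2)).const_mul
    (Real.sqrt (2 * Real.pi))⁻¹
  refine h.congr (Filter.Eventually.of_forall fun x => ?_)
  simp only [phiPdf]
  ring_nf

lemma integral_phiPdf : ∫ x, phiPdf x = 1 := by
  have h : ∫ x : ℝ, Real.exp (-(1/2) * x ^ 2) = Real.sqrt (Real.pi / (1/2)) :=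
    integral_gaussian (1/2)
  have h2 : ∫ x, phiPdf x = (Real.sqrt (2 * Real.pi))⁻¹ * ∫ x : ℝ, Real.exp (-(1/2) * x ^ 2) := by
    rw [← integral_const_mul]
    congr 1; funext x; simp only [phiPdf]; ring_nf
  rw [h2, h, show Real.pi / (1/2) = 2 * Real.pi by ring]
  rw [inv_mul_cancel₀]
  positivity

lemma PhiCdf_neg (x : ℝ) : PhiCdf (-x) = 1 - PhiCdf x := by
  have h1 : PhiCdf (-x) = ∫ u in Ioi x, phiPdf u := by
    have h := integral_comp_neg_Iic (-x) phiPdf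
    simp only [phiPdf_neg, neg_neg] at h
    rw [PhiCdf, h]
  have h2 : PhiCdf x + (∫ u in Ioi x, phiPdf u) = 1 := by
    rw [PhiCdf, intervalIntegral.integral_Iic_add_Ioi integrable_phiPdf.integrableOn
      integrable_phiPdf.integrableOn, integral_phiPdf]
  linarith [h2, h1.symm]

lemma km_neg (m : ℕ) (d γ : ℝ) : km m d (-γ) = -(km m d γ) := by
  unfold km
  rw [← integral_neg]
  congr 1
  funext w
  have h1 : PhiCdf (d * w + γ) = 1 - PhiCdf (-(d * w) - γ) := by
    have h := PhiCdf_neg (-(d * w) - γ)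
    rw [show -(-(d * w) - γ) = d * w + γ by ring] at h
    linarith
  have h2 : PhiCdf (-(d * w) + γ) = 1 - PhiCdf (d * w - γ) := by
    have h := PhiCdf_neg (d * w - γ)
    rw [show -(d * w - γ) = -(d * w) + γ by ring] at h
    linarith
  rw [show d * w + -γ = d * w - γ by ring, show d * w - -γ = d * w + γ by ring,
    show -(d * w) - -γ = -(d * w) + γ by ring, h1, h2]
  ring

lemma qm_neg (m : ℕ) (d γ : ℝ) : qm m d (-γ) = qm m d γ := by
  unfold qm
  congr 1
  funext w
  have h1 : PhiCdf (d * w + γ) = 1 - PhiCdf (-(d * w) - γ) := by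
    have h := PhiCdf_neg (-(d * w) - γ)
    rw [show -(-(d * w) - γ) = d * w + γ by ring] at h
    linarith
  have h2 : PhiCdf (-(d * w) + γ) = 1 - PhiCdf (d * w - γ) := by
    have h := PhiCdf_neg (d * w - γ)
    rw [show -(d * w - γ) = -(d * w) + γ by ring] at h
    linarith
  rw [show d * w + -γ = d * w - γ by ring, show d * w - -γ = d * w + γ by ring,
    show -(d * w) - -γ = -(d * w) + γ by ring, h1, h2]
  ring

lemma hm_neg (m : ℕ) (d γ : ℝ) : hm m d (-γ) = -(hm m d γ) := by
  unfold hm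
  rw [← integral_neg]
  congr 1
  funext w
  rw [show d * w + -γ = d * w - γ by ring, show d * w - -γ = d * w + γ by ring]
  ring

lemma rdelta_neg_gamma (m n : ℕ) (d ρ γ : ℝ) :
    rdelta m n d ρ (-γ) = rdelta m n d ρ γ := by
  unfold rdelta
  rw [km_neg, qm_neg, hm_neg]
  congr 1
  ring

lemma rdelta_neg_rho (m n : ℕ) (d ρ γ : ℝ) :
    rdelta m n d (-ρ) γ = rdelta m n d ρ γ := by
  unfold rdelta
  congr 1
  ring

lemma Psi_reflect (l u μ v : ℝ) : Psi (-u) (-l) (-μ) v = Psi l u μ v := by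
  unfold Psi
  congr 1
  have hmap : (gaussianReal μ v.toNNReal).map ((-1 : ℝ) * ·) = gaussianReal (-μ) v.toNNReal := by
    rw [gaussianReal_map_const_mul]
    congr 1
    · ring
    · ext
      norm_num
  rw [← hmap, Measure.map_apply (measurable_const_mul (-1)) measurableSet_Icc]
  congr 1
  ext x
  simp only [Set.mem_preimage, Set.mem_Icc, neg_one_mul]
  constructor
  · rintro ⟨ha, hb⟩; exact ⟨by linarith, by linarith⟩
  · rintro ⟨ha, hb⟩; exact ⟨by linarith, by linarith⟩

lemma Psi_neg_mean (A B μ v : ℝ) :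
    Psi (-A + -B) (A + -B) (-μ) v = Psi (-A + B) (A + B) μ v := by
  have h := Psi_reflect (-A + B) (A + B) μ v
  rw [show -(A + B) = -A + -B by ring, show -(-A + B) = A + -B by ring] at h
  exact h

/-- the coverage probability function `CP_delta` is an even function of `γ`
for each `ρ` and an even function of `ρ` for each `γ`. -/
theorem CP_delta_even (m n : ℕ) (hm : 0 < m) (hmn : m < n)
    (α αt : ℝ) (hα : α ∈ Ioo (0 : ℝ) 1) (hαt : αt ∈ Ioo (0 : ℝ) 1)
    (d tα : ℝ) (hd : IsTQuantile m αt d) (htα : IsTQuantile m α tα)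
    (CP : ℝ → ℝ → ℝ)
    (hCP : CP = fun γ ρ =>
      ∫ w in Ioi (0 : ℝ),
        (∫ y,
          Psi (-(w * tα * rdelta m n d ρ ((y + γ) / w)) + w * ρ * km m d ((y + γ) / w))
              (w * tα * rdelta m n d ρ ((y + γ) / w) + w * ρ * km m d ((y + γ) / w))
              (ρ * y) (1 - ρ ^ 2) * phiPdf y) * fW m w) :
    ∀ γ : ℝ, ∀ ρ ∈ Ioo (-1 : ℝ) 1, CP (-γ) ρ = CP γ ρ ∧ CP γ (-ρ) = CP γ ρ := by
  subst hCP
  intro γ ρ hρ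
  constructor
  · -- even in γ
    simp only
    congr 1
    funext w
    congr 1
    have key : ∀ y : ℝ,
        Psi (-(w * tα * rdelta m n d ρ ((y + -γ) / w)) + w * ρ * km m d ((y + -γ) / w))
            (w * tα * rdelta m n d ρ ((y + -γ) / w) + w * ρ * km m d ((y + -γ) / w))
            (ρ * y) (1 - ρ ^ 2) * phiPdf y
          = (fun z => Psi (-(w * tα * rdelta m n d ρ ((z + γ) / w)) + w * ρ * km m d ((z + γ) / w))
              (w * tα * rdelta m n d ρ ((z + γ) / w) + w * ρ * km m d ((z + γ) / w))
              (ρ * z) (1 - ρ ^ 2) * phiPdf z) (-y) := by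
      intro y
      simp only
      rw [show (-y + γ) / w = -((y + -γ) / w) by ring, rdelta_neg_gamma, km_neg, phiPdf_neg,
        show ρ * -y = -(ρ * y) by ring,
        show w * ρ * -km m d ((y + -γ) / w) = -(w * ρ * km m d ((y + -γ) / w)) by ring,
        Psi_neg_mean]
    calc (∫ y, Psi (-(w * tα * rdelta m n d ρ ((y + -γ) / w)) + w * ρ * km m d ((y + -γ) / w))
            (w * tα * rdelta m n d ρ ((y + -γ) / w) + w * ρ * km m d ((y + -γ) / w))
            (ρ * y) (1 - ρ ^ 2) * phiPdf y)
        = ∫ y, (fun z => Psi (-(w * tα * rdelta m n d ρ ((z + γ) / w)) + w * ρ * km m d ((z + γ) / w))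
              (w * tα * rdelta m n d ρ ((z + γ) / w) + w * ρ * km m d ((z + γ) / w))
              (ρ * z) (1 - ρ ^ 2) * phiPdf z) (-y) := by
          congr 1; funext y; exact key y
      _ = _ :=
          integral_neg_eq_self (fun z =>
            Psi (-(w * tα * rdelta m n d ρ ((z + γ) / w)) + w * ρ * km m d ((z + γ) / w))
              (w * tα * rdelta m n d ρ ((z + γ) / w) + w * ρ * km m d ((z + γ) / w))
              (ρ * z) (1 - ρ ^ 2) * phiPdf z) volume
  · -- even in ρ
    simp only
    congr 1
    funext w
    congr 1
    congr 1
    funext y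
    rw [rdelta_neg_rho, show (1 - (-ρ) ^ 2 : ℝ) = 1 - ρ ^ 2 by ring,
      show -ρ * y = -(ρ * y) by ring,
      show w * -ρ * km m d ((y + γ) / w) = -(w * ρ * km m d ((y + γ) / w)) by ring,
      Psi_neg_mean]
end
end

section
/- Fix α̃ ∈ (0,1) and γ ∈ ℝ, and let d = Φ⁻¹(1 − α̃/2) be the 1 − α̃/2 quantile of the standard normal distribution. Then, as m → ∞, q_m(γ) converges to −d φ(d + γ) − d φ(d − γ) + Φ(d − γ) − Φ(−d − γ), and h_m(γ) converges to d² φ(d + γ) − d² φ(d − γ). -/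
open MeasureTheory ProbabilityTheory Matrix Set Filter

noncomputable section

section AuxProofs

/-! ### Basic facts about `phiPdf` and `PhiCdf` -/

lemma phiPdf_def (x : ℝ) : phiPdf x = (Real.sqrt (2 * Real.pi))⁻¹ * Real.exp (-(x ^ 2) / 2) := rfl

lemma phiPdf_eq (x : ℝ) : phiPdf x = (Real.sqrt (2 * Real.pi))⁻¹ * Real.exp (-(1/2) * x ^ 2) := by
  rw [phiPdf]; ring_nf

lemma phiPdf_nonneg (x : ℝ) : 0 ≤ phiPdf x := by
  unfold phiPdf; positivity

lemma phiPdf_pos (x : ℝ) : 0 < phiPdf x := by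
  unfold phiPdf; positivity

@[fun_prop]
lemma continuous_phiPdf : Continuous phiPdf := by
  unfold phiPdf; fun_prop

lemma phiPdf_le (x : ℝ) : phiPdf x ≤ (Real.sqrt (2 * Real.pi))⁻¹ := by
  unfold phiPdf
  have h1 : Real.exp (-(x ^ 2) / 2) ≤ 1 := by
    rw [Real.exp_le_one_iff]; nlinarith [sq_nonneg x]
  have h2 : (0:ℝ) < (Real.sqrt (2 * Real.pi))⁻¹ := by positivity
  nlinarith

lemma integrable_phiPdf_s18 : MeasureTheory.Integrable phiPdf := by
  have h : phiPdf = fun x => (Real.sqrt (2 * Real.pi))⁻¹ * Real.exp (-(1/2) * x ^ 2) :=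
    funext phiPdf_eq
  rw [h]
  exact (integrable_exp_neg_mul_sq (b := 1/2) (by norm_num)).const_mul _

lemma PhiCdf_nonneg (x : ℝ) : 0 ≤ PhiCdf x :=
  MeasureTheory.integral_nonneg fun u => phiPdf_nonneg u

lemma PhiCdf_le_one (x : ℝ) : PhiCdf x ≤ 1 := by
  rw [← integral_phiPdf, PhiCdf]
  have h : ∫ u, phiPdf u = ∫ u in (univ : Set ℝ), phiPdf u := by simp
  rw [h]
  refine MeasureTheory.setIntegral_mono_set integrable_phiPdf_s18.integrableOn ?_ ?_
  · exact Eventually.of_forall fun u => phiPdf_nonneg u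
  · exact Eventually.of_forall fun u hu => mem_univ u

lemma PhiCdf_sub (x y : ℝ) : PhiCdf y - PhiCdf x = ∫ u in x..y, phiPdf u :=
  intervalIntegral.integral_Iic_sub_Iic integrable_phiPdf_s18.integrableOn
    integrable_phiPdf_s18.integrableOn

lemma PhiCdf_mono : Monotone PhiCdf := by
  intro x y hxy
  have h := PhiCdf_sub x y
  have h2 : 0 ≤ ∫ u in x..y, phiPdf u :=
    intervalIntegral.integral_nonneg hxy fun u _ => phiPdf_nonneg u
  linarith

lemma PhiCdf_strictMono : StrictMono PhiCdf := by
  intro x y hxy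
  have h := PhiCdf_sub x y
  have h2 : 0 < ∫ u in x..y, phiPdf u := by
    apply intervalIntegral.intervalIntegral_pos_of_pos
    · exact integrable_phiPdf_s18.intervalIntegrable
    · exact fun u => phiPdf_pos u
    · exact hxy
  linarith

lemma PhiCdf_lipschitz : LipschitzWith (Real.sqrt (2 * Real.pi))⁻¹.toNNReal PhiCdf := by
  apply LipschitzWith.of_dist_le_mul
  intro x y
  wlog hxy : y ≤ x generalizing x y
  · rw [dist_comm, dist_comm x y]; exact this y x (le_of_not_ge hxy)
  rw [Real.dist_eq, Real.dist_eq, abs_of_nonneg (sub_nonneg.2 (PhiCdf_mono hxy)),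
    abs_of_nonneg (sub_nonneg.2 hxy)]
  have h := PhiCdf_sub y x
  rw [h]
  calc ∫ u in y..x, phiPdf u ≤ ∫ u in y..x, (Real.sqrt (2 * Real.pi))⁻¹ := by
        apply intervalIntegral.integral_mono_on hxy integrable_phiPdf_s18.intervalIntegrable
          (intervalIntegrable_const)
        exact fun u _ => phiPdf_le u
    _ = (Real.sqrt (2 * Real.pi))⁻¹ * (x - y) := by
        rw [intervalIntegral.integral_const, smul_eq_mul]; ring
    _ ≤ _ := by
        rw [Real.coe_toNNReal _ (by positivity)]

@[fun_prop]
lemma continuous_PhiCdf : Continuous PhiCdf := PhiCdf_lipschitz.continuous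

/-! ### Moments of `fW` -/

lemma integral_rpow_mul_exp_neg_mul_sq' {b s : ℝ} (hb : 0 < b) (hs : -1 < s) :
    ∫ x in Ioi (0:ℝ), x ^ s * Real.exp (-b * x ^ 2)
      = b ^ (-(s+1)/2) * (1/2) * Real.Gamma ((s+1)/2) := by
  rw [← integral_rpow_mul_exp_neg_mul_rpow two_pos hs hb]
  refine MeasureTheory.setIntegral_congr_fun measurableSet_Ioi fun x hx => ?_
  rw [show ((2:ℝ)) = ((2:ℕ):ℝ) by norm_num, Real.rpow_natCast]

lemma fW_nonneg (m : ℕ) {w : ℝ} (hw : 0 < w) : 0 ≤ fW m w := by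
  unfold fW
  have h1 : 0 ≤ Real.Gamma ((m:ℝ)/2) := by
    rcases Nat.eq_zero_or_pos m with h | h
    · simp [h]
    · exact le_of_lt (Real.Gamma_pos_of_pos (by positivity))
  positivity

lemma measurable_fW (m : ℕ) : Measurable (fW m) := by
  unfold fW
  fun_prop

lemma fW_eq (m : ℕ) {w : ℝ} (hw : 0 < w) (k : ℕ) :
    w ^ k * fW m w =
      ((2 / Real.Gamma ((m : ℝ) / 2)) * ((m : ℝ) / 2) ^ ((m : ℝ) / 2)) *
        (w ^ ((m:ℝ) - 1 + k) * Real.exp (-((m:ℝ)/2) * w ^ 2)) := by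
  unfold fW
  rw [Real.rpow_add hw, Real.rpow_natCast]
  ring_nf

lemma integrableOn_pow_mul_fW (m : ℕ) (hm : 0 < m) (k : ℕ) :
    MeasureTheory.IntegrableOn (fun w => w ^ k * fW m w) (Ioi (0:ℝ)) := by
  have hb : (0:ℝ) < (m:ℝ)/2 := by positivity
  have hs : (-1:ℝ) < (m:ℝ) - 1 + k := by
    have h1 : (1:ℝ) ≤ (m:ℝ) := by exact_mod_cast hm
    linarith [Nat.cast_nonneg (α := ℝ) k]
  have h := ((integrableOn_rpow_mul_exp_neg_mul_sq hb hs).const_mul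
    ((2 / Real.Gamma ((m : ℝ) / 2)) * ((m : ℝ) / 2) ^ ((m : ℝ) / 2)))
  exact MeasureTheory.IntegrableOn.congr_fun h (fun w hw => (fW_eq m hw k).symm)
    measurableSet_Ioi

lemma fW_moment (m : ℕ) (hm : 0 < m) (k : ℕ) :
    ∫ w in Ioi (0:ℝ), w ^ k * fW m w
      = ((m:ℝ)/2) ^ (-(k:ℝ)/2) * (Real.Gamma (((m:ℝ)+k)/2) / Real.Gamma ((m:ℝ)/2)) := by
  have hb : (0:ℝ) < (m:ℝ)/2 := by positivity
  have hs : (-1:ℝ) < (m:ℝ) - 1 + k := by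
    have h1 : (1:ℝ) ≤ (m:ℝ) := by exact_mod_cast hm
    linarith [Nat.cast_nonneg (α := ℝ) k]
  rw [MeasureTheory.setIntegral_congr_fun measurableSet_Ioi (fun w hw => fW_eq m hw k),
    MeasureTheory.integral_const_mul, integral_rpow_mul_exp_neg_mul_sq' hb hs]
  rw [show ((m:ℝ) - 1 + k + 1) = (m:ℝ) + k by ring]
  rw [show (-(((m:ℝ)+k))/2 : ℝ) = -(((m:ℝ)+k)/2) by ring, Real.rpow_neg hb.le,
    show (-(k:ℝ)/2 : ℝ) = -((k:ℝ)/2) by ring, Real.rpow_neg hb.le]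
  rw [show ((m:ℝ)+k)/2 = (m:ℝ)/2 + (k:ℝ)/2 by ring, Real.rpow_add hb]
  have h1 : ((m:ℝ)/2) ^ ((m:ℝ)/2) ≠ 0 := by positivity
  field_simp

lemma fW_moment0 (m : ℕ) (hm : 0 < m) : ∫ w in Ioi (0:ℝ), fW m w = 1 := by
  have h := fW_moment m hm 0
  have hG : Real.Gamma ((m:ℝ)/2) ≠ 0 := (Real.Gamma_pos_of_pos (by positivity)).ne'
  simp only [pow_zero, one_mul, Nat.cast_zero, add_zero, neg_zero, zero_div,
    Real.rpow_zero] at h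
  rw [h, div_self hG]

lemma fW_moment2 (m : ℕ) (hm : 0 < m) : ∫ w in Ioi (0:ℝ), w ^ 2 * fW m w = 1 := by
  have h := fW_moment m hm 2
  have hm2 : ((m:ℝ)/2) ≠ 0 := by positivity
  have hG : Real.Gamma ((m:ℝ)/2) ≠ 0 := (Real.Gamma_pos_of_pos (by positivity)).ne'
  have hGam : Real.Gamma (((m:ℝ)+2)/2) = ((m:ℝ)/2) * Real.Gamma ((m:ℝ)/2) := by
    rw [show ((m:ℝ)+2)/2 = (m:ℝ)/2 + 1 by ring, Real.Gamma_add_one hm2]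
  push_cast at h
  rw [h, hGam]
  rw [show ((-2:ℝ)/2 : ℝ) = (-1 : ℝ) by norm_num, Real.rpow_neg_one]
  field_simp

lemma fW_moment4 (m : ℕ) (hm : 0 < m) :
    ∫ w in Ioi (0:ℝ), w ^ 4 * fW m w = ((m:ℝ) + 2) / m := by
  have h := fW_moment m hm 4
  have hm2 : ((m:ℝ)/2) ≠ 0 := by positivity
  have hm21 : ((m:ℝ)/2 + 1) ≠ 0 := by positivity
  have hG : Real.Gamma ((m:ℝ)/2) ≠ 0 := (Real.Gamma_pos_of_pos (by positivity)).ne'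
  have hGam : Real.Gamma (((m:ℝ)+4)/2) = ((m:ℝ)/2+1) * (((m:ℝ)/2) * Real.Gamma ((m:ℝ)/2)) := by
    rw [show ((m:ℝ)+4)/2 = ((m:ℝ)/2 + 1) + 1 by ring, Real.Gamma_add_one hm21,
      Real.Gamma_add_one hm2]
  push_cast at h
  rw [h, hGam]
  rw [show ((-4:ℝ)/2 : ℝ) = ((-2 : ℤ) : ℝ) by norm_num, Real.rpow_intCast,
    _root_.zpow_neg, zpow_two]
  have hmne : ((m:ℝ)) ≠ 0 := by positivity
  field_simp

lemma integrableOn_fW (m : ℕ) (hm : 0 < m) : MeasureTheory.IntegrableOn (fW m) (Ioi (0:ℝ)) :=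
  MeasureTheory.IntegrableOn.congr_fun (integrableOn_pow_mul_fW m hm 0)
    (fun w _ => by ring) measurableSet_Ioi

lemma integrableOn_dev_mul_fW (m : ℕ) (hm : 0 < m) :
    MeasureTheory.IntegrableOn (fun w => (w ^ 2 - 1) ^ 2 * fW m w) (Ioi (0:ℝ)) := by
  have h4 := integrableOn_pow_mul_fW m hm 4
  have h2 := integrableOn_pow_mul_fW m hm 2
  have h0 := integrableOn_pow_mul_fW m hm 0
  exact MeasureTheory.IntegrableOn.congr_fun ((h4.sub (h2.const_mul 2)).add h0)
    (fun w _ => by simp only [Pi.add_apply, Pi.sub_apply]; ring) measurableSet_Ioi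

lemma fW_var (m : ℕ) (hm : 0 < m) :
    ∫ w in Ioi (0:ℝ), (w ^ 2 - 1) ^ 2 * fW m w = 2 / (m:ℝ) := by
  have h4 := integrableOn_pow_mul_fW m hm 4
  have h2 := integrableOn_pow_mul_fW m hm 2
  have h0 := integrableOn_pow_mul_fW m hm 0
  have heq : ∀ w ∈ Ioi (0:ℝ), (w ^ 2 - 1) ^ 2 * fW m w
      = (w ^ 4 * fW m w - 2 * (w ^ 2 * fW m w)) + w ^ 0 * fW m w := fun w _ => by ring
  have hsub : MeasureTheory.IntegrableOn
      (fun w => w ^ 4 * fW m w - 2 * (w ^ 2 * fW m w)) (Ioi (0:ℝ)) :=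
    MeasureTheory.IntegrableOn.congr_fun (h4.sub (h2.const_mul 2))
      (fun w _ => by simp only [Pi.sub_apply]) measurableSet_Ioi
  rw [MeasureTheory.setIntegral_congr_fun measurableSet_Ioi heq,
    MeasureTheory.integral_add hsub h0, MeasureTheory.integral_sub h4 (h2.const_mul 2),
    MeasureTheory.integral_const_mul, fW_moment4 m hm, fW_moment2 m hm]
  have h00 : ∫ w in Ioi (0:ℝ), w ^ 0 * fW m w = 1 := by
    rw [MeasureTheory.setIntegral_congr_fun measurableSet_Ioi
      (fun w _ => by ring : ∀ w ∈ Ioi (0:ℝ), w ^ 0 * fW m w = fW m w)]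
    exact fW_moment0 m hm
  rw [h00]
  have hmne : ((m:ℝ)) ≠ 0 := by positivity
  field_simp
  ring

/-! ### Concentration of `fW` around 1 -/

lemma integrableOn_bdd_mul_fW (m : ℕ) (hm : 0 < m) {g : ℝ → ℝ}
    (hg : MeasureTheory.AEStronglyMeasurable g
      (MeasureTheory.volume.restrict (Ioi (0:ℝ)))) {C : ℝ}
    (hb : ∀ w ∈ Ioi (0:ℝ), |g w| ≤ C) :
    MeasureTheory.IntegrableOn (fun w => g w * fW m w) (Ioi (0:ℝ)) := by
  apply MeasureTheory.Integrable.mono' ((integrableOn_fW m hm).const_mul C)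
  · exact hg.mul (measurable_fW m).aestronglyMeasurable.restrict
  · rw [MeasureTheory.ae_restrict_iff' measurableSet_Ioi]
    refine Eventually.of_forall fun w hw => ?_
    rw [Real.norm_eq_abs, abs_mul, abs_of_nonneg (fW_nonneg m hw)]
    exact mul_le_mul_of_nonneg_right (hb w hw) (fW_nonneg m hw)

/-- Main concentration lemma: for `G` continuous and bounded and `t m → d`,
`∫ G (t m * w) f_W(w) dw → G d` as `m → ∞`. -/
lemma tendsto_integral_G (G : ℝ → ℝ) (hG : Continuous G) (C : ℝ) (hC : ∀ x, |G x| ≤ C)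
    (t : ℕ → ℝ) (d : ℝ) (ht : Tendsto t atTop (nhds d)) :
    Tendsto (fun m => ∫ w in Ioi (0:ℝ), G (t m * w) * fW m w) atTop (nhds (G d)) := by
  rw [Metric.tendsto_nhds]
  intro ε hε
  obtain ⟨δ', hδ', hcont⟩ := Metric.continuousAt_iff.1 hG.continuousAt (ε/2) (by linarith)
  set δ : ℝ := min 1 (δ' / (2 * (|d| + 1))) with hδdef
  have hδpos : 0 < δ := lt_min one_pos (by positivity)
  have hC0 : 0 ≤ C := le_trans (abs_nonneg _) (hC 0)
  set c : ℝ := (C + |G d|) / δ ^ 2 with hc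
  have hcpos : 0 ≤ c := by positivity
  have hev1 : ∀ᶠ m : ℕ in atTop, |t m - d| < δ' / 4 := by
    have h := Metric.tendsto_nhds.1 ht (δ' / 4) (by linarith)
    simpa [Real.dist_eq] using h
  have hev2 : ∀ᶠ m : ℕ in atTop, c * (2 / (m:ℝ)) < ε / 2 := by
    have h0 : Tendsto (fun m : ℕ => c * (2 / (m:ℝ))) atTop (nhds (c * 0)) :=
      (tendsto_const_div_atTop_nhds_zero_nat 2).const_mul c
    rw [mul_zero] at h0
    exact h0.eventually (eventually_lt_nhds (by linarith))
  filter_upwards [hev1, hev2, eventually_gt_atTop 0] with m h1 h2 hm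
  have hpt : ∀ w ∈ Ioi (0:ℝ), |G (t m * w) - G d| ≤ ε / 2 + c * (w ^ 2 - 1) ^ 2 := by
    intro w hw
    rw [mem_Ioi] at hw
    by_cases hwd : |w - 1| < δ
    · have hw2 : w < 2 := by
        have h3 : w - 1 < δ := (le_abs_self _).trans_lt hwd
        have h4 : δ ≤ 1 := min_le_left _ _
        linarith
      have hdist : |t m * w - d| < δ' := by
        have heq : t m * w - d = (t m - d) * w + d * (w - 1) := by ring
        have h3 : |t m * w - d| ≤ |t m - d| * w + |d| * |w - 1| := by
          rw [heq]
          calc |(t m - d) * w + d * (w - 1)| ≤ |(t m - d) * w| + |d * (w - 1)| := abs_add_le _ _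
            _ = |t m - d| * |w| + |d| * |w - 1| := by rw [abs_mul, abs_mul]
            _ = |t m - d| * w + |d| * |w - 1| := by rw [abs_of_nonneg hw.le]
        have h4 : |t m - d| * w < δ' / 2 := by
          have h4a : |t m - d| * w ≤ |t m - d| * 2 :=
            mul_le_mul_of_nonneg_left hw2.le (abs_nonneg _)
          nlinarith [abs_nonneg (t m - d)]
        have h5 : |d| * |w - 1| ≤ |d| * δ :=
          mul_le_mul_of_nonneg_left hwd.le (abs_nonneg d)
        have h6 : |d| * δ ≤ δ' / 2 := by
          have hδle : δ ≤ δ' / (2 * (|d| + 1)) := min_le_right _ _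
          have h7 : |d| * δ ≤ |d| * (δ' / (2 * (|d| + 1))) :=
            mul_le_mul_of_nonneg_left hδle (abs_nonneg d)
          have h8 : |d| * (δ' / (2 * (|d| + 1))) ≤ δ' / 2 := by
            rw [← mul_div_assoc, div_le_div_iff₀ (by positivity) (by norm_num)]
            nlinarith [abs_nonneg d, hδ'.le]
          linarith
        linarith
      have h9 := hcont (by rw [Real.dist_eq]; exact hdist)
      rw [Real.dist_eq] at h9
      nlinarith [sq_nonneg (w^2 - 1), mul_nonneg hcpos (sq_nonneg (w^2-1))]
    · push_neg at hwd
      have hdev : δ ≤ |w ^ 2 - 1| := by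
        rcases le_or_gt 1 w with hw1 | hw1
        · have h3 : w - 1 ≥ δ := by rwa [abs_of_nonneg (by linarith)] at hwd
          rw [abs_of_nonneg (by nlinarith)]
          nlinarith
        · have h3 : 1 - w ≥ δ := by rwa [abs_of_neg (by linarith), neg_sub] at hwd
          rw [abs_of_nonpos (by nlinarith)]
          nlinarith
      have hdev2 : δ ^ 2 ≤ (w ^ 2 - 1) ^ 2 := by
        have h9 := pow_le_pow_left₀ hδpos.le hdev 2
        rwa [sq_abs] at h9
      have hb1 : |G (t m * w) - G d| ≤ C + |G d| := by
        calc |G (t m * w) - G d| ≤ |G (t m * w)| + |G d| := abs_sub _ _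
          _ ≤ C + |G d| := by have := hC (t m * w); linarith
      have hb2 : C + |G d| ≤ c * (w ^ 2 - 1) ^ 2 := by
        rw [hc, div_mul_eq_mul_div, le_div_iff₀ (by positivity)]
        nlinarith [abs_nonneg (G d)]
      linarith
  have hIntg : MeasureTheory.IntegrableOn (fun w => G (t m * w) * fW m w) (Ioi (0:ℝ)) :=
    integrableOn_bdd_mul_fW m hm
      ((hG.comp (continuous_const.mul continuous_id)).aestronglyMeasurable.restrict)
      (fun w _ => hC _)
  have hIntc : MeasureTheory.IntegrableOn (fun w => G d * fW m w) (Ioi (0:ℝ)) :=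
    (integrableOn_fW m hm).const_mul _
  have hIntsub : MeasureTheory.IntegrableOn
      (fun w => (G (t m * w) - G d) * fW m w) (Ioi (0:ℝ)) :=
    MeasureTheory.IntegrableOn.congr_fun (hIntg.sub hIntc)
      (fun w _ => by simp only [Pi.sub_apply]; ring) measurableSet_Ioi
  have hIntdom : MeasureTheory.IntegrableOn
      (fun w => (ε / 2 + c * (w ^ 2 - 1) ^ 2) * fW m w) (Ioi (0:ℝ)) :=
    MeasureTheory.IntegrableOn.congr_fun
      (((integrableOn_fW m hm).const_mul (ε/2)).add
        ((integrableOn_dev_mul_fW m hm).const_mul c))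
      (fun w _ => by simp only [Pi.add_apply]; ring) measurableSet_Ioi
  have key : |(∫ w in Ioi (0:ℝ), G (t m * w) * fW m w) - G d| ≤ ε / 2 + c * (2 / (m:ℝ)) := by
    have hGd : G d = ∫ w in Ioi (0:ℝ), G d * fW m w := by
      rw [MeasureTheory.integral_const_mul, fW_moment0 m hm, mul_one]
    calc |(∫ w in Ioi (0:ℝ), G (t m * w) * fW m w) - G d|
        = |∫ w in Ioi (0:ℝ), (G (t m * w) - G d) * fW m w| := by
          rw [show (∫ w in Ioi (0:ℝ), (G (t m * w) - G d) * fW m w)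
              = (∫ w in Ioi (0:ℝ), G (t m * w) * fW m w) - ∫ w in Ioi (0:ℝ), G d * fW m w by
            rw [← MeasureTheory.integral_sub hIntg hIntc]
            exact MeasureTheory.setIntegral_congr_fun measurableSet_Ioi fun w _ => by ring]
          rw [← hGd]
      _ ≤ ∫ w in Ioi (0:ℝ), |(G (t m * w) - G d) * fW m w| := by
          have h :=
            MeasureTheory.norm_integral_le_integral_norm
              (μ := MeasureTheory.volume.restrict (Ioi (0:ℝ)))
              (f := fun w => (G (t m * w) - G d) * fW m w)
          simp only [Real.norm_eq_abs] at h
          exact h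
      _ ≤ ∫ w in Ioi (0:ℝ), (ε / 2 + c * (w ^ 2 - 1) ^ 2) * fW m w := by
          apply MeasureTheory.setIntegral_mono_on hIntsub.abs hIntdom measurableSet_Ioi
          intro w hw
          rw [abs_mul, abs_of_nonneg (fW_nonneg m hw)]
          exact mul_le_mul_of_nonneg_right (hpt w hw) (fW_nonneg m hw)
      _ = ε / 2 + c * (2 / (m:ℝ)) := by
          rw [MeasureTheory.setIntegral_congr_fun measurableSet_Ioi
            (fun w _ => by ring :
              ∀ w ∈ Ioi (0:ℝ), (ε / 2 + c * (w ^ 2 - 1) ^ 2) * fW m w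
                = ε / 2 * fW m w + c * ((w ^ 2 - 1) ^ 2 * fW m w)),
            MeasureTheory.integral_add ((integrableOn_fW m hm).const_mul _)
              ((integrableOn_dev_mul_fW m hm).const_mul _),
            MeasureTheory.integral_const_mul, MeasureTheory.integral_const_mul,
            fW_moment0 m hm, fW_var m hm, mul_one]
  rw [Real.dist_eq]
  calc |(∫ w in Ioi (0:ℝ), G (t m * w) * fW m w) - G d| ≤ ε / 2 + c * (2 / (m:ℝ)) := key
    _ < ε := by linarith

/-! ### Convergence of the quantiles -/

lemma tendsto_dm (αt : ℝ) (dm : ℕ → ℝ) (hdm : ∀ m : ℕ, 0 < m → IsTQuantile m αt (dm m))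
    (d : ℝ) (hd : PhiCdf d = 1 - αt / 2) : Tendsto dm atTop (nhds d) := by
  have hPhiBound : ∀ x : ℝ, |PhiCdf x| ≤ 1 := fun x =>
    abs_le.2 ⟨by linarith [PhiCdf_nonneg x], PhiCdf_le_one x⟩
  have hInt : ∀ (m : ℕ), 0 < m → ∀ (a : ℝ),
      MeasureTheory.IntegrableOn (fun w => PhiCdf (a * w) * fW m w) (Ioi (0:ℝ)) := fun m hm a =>
    integrableOn_bdd_mul_fW m hm
      ((continuous_PhiCdf.comp
        (continuous_const.mul continuous_id)).aestronglyMeasurable.restrict)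
      (fun w _ => hPhiBound _)
  have hFt : ∀ t₀ : ℝ, Tendsto (fun m => ∫ w in Ioi (0:ℝ), PhiCdf (t₀ * w) * fW m w)
      atTop (nhds (PhiCdf t₀)) := fun t₀ =>
    tendsto_integral_G PhiCdf continuous_PhiCdf 1 hPhiBound (fun _ => t₀) t₀ tendsto_const_nhds
  rw [Metric.tendsto_nhds]
  intro ε hε
  have hlt1 : PhiCdf d < PhiCdf (d + ε) := PhiCdf_strictMono (by linarith)
  have hlt2 : PhiCdf (d - ε) < PhiCdf d := PhiCdf_strictMono (by linarith)
  have ev1 := (hFt (d + ε)).eventually (eventually_gt_nhds hlt1)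
  have ev2 := (hFt (d - ε)).eventually (eventually_lt_nhds hlt2)
  filter_upwards [ev1, ev2, eventually_gt_atTop 0] with m h1 h2 hm
  have hF : (∫ w in Ioi (0:ℝ), PhiCdf (dm m * w) * fW m w) = PhiCdf d := by
    have h3 := hdm m hm
    unfold IsTQuantile at h3
    rw [h3, hd]
  have hmono : ∀ {a b : ℝ}, a ≤ b →
      (∫ w in Ioi (0:ℝ), PhiCdf (a * w) * fW m w)
        ≤ ∫ w in Ioi (0:ℝ), PhiCdf (b * w) * fW m w := by
    intro a b hab
    refine MeasureTheory.setIntegral_mono_on (hInt m hm a) (hInt m hm b)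
      measurableSet_Ioi fun w hw => ?_
    rw [mem_Ioi] at hw
    exact mul_le_mul_of_nonneg_right
      (PhiCdf_mono (mul_le_mul_of_nonneg_right hab hw.le)) (fW_nonneg m hw)
  rw [Real.dist_eq, abs_lt]
  constructor
  · by_contra hcon
    push_neg at hcon
    have h3 : dm m ≤ d - ε := by linarith
    have h4 := hmono h3
    rw [hF] at h4
    linarith
  · by_contra hcon
    push_neg at hcon
    have h3 : d + ε ≤ dm m := by linarith
    have h4 := hmono h3
    rw [hF] at h4
    linarith

/-! ### Bounds on the integrands -/

lemma abs_mul_exp_le (y : ℝ) : |y| * Real.exp (-(y ^ 2) / 2) ≤ 1 := by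
  have h1 : |y| ≤ Real.exp (y ^ 2 / 2) := by
    have h2 := Real.add_one_le_exp (y ^ 2 / 2)
    nlinarith [sq_abs y, sq_nonneg (|y| - 1)]
  rw [show -(y ^ 2) / 2 = -(y ^ 2 / 2) by ring, Real.exp_neg]
  calc |y| * (Real.exp (y ^ 2 / 2))⁻¹ ≤ Real.exp (y ^ 2 / 2) * (Real.exp (y ^ 2 / 2))⁻¹ := by
        gcongr
    _ = 1 := mul_inv_cancel₀ (Real.exp_ne_zero _)

lemma sq_mul_exp_le (y : ℝ) : y ^ 2 * Real.exp (-(y ^ 2) / 2) ≤ 2 := by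
  have h1 : y ^ 2 ≤ 2 * Real.exp (y ^ 2 / 2) := by
    nlinarith [Real.add_one_le_exp (y ^ 2 / 2)]
  rw [show -(y ^ 2) / 2 = -(y ^ 2 / 2) by ring, Real.exp_neg]
  calc y ^ 2 * (Real.exp (y ^ 2 / 2))⁻¹
      ≤ 2 * Real.exp (y ^ 2 / 2) * (Real.exp (y ^ 2 / 2))⁻¹ :=
        mul_le_mul_of_nonneg_right h1 (by positivity)
    _ = 2 := by rw [mul_assoc, mul_inv_cancel₀ (Real.exp_ne_zero _), mul_one]

lemma abs_mul_phiPdf_le (x c : ℝ) :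
    |x * phiPdf (x + c)| ≤ (1 + |c|) * (Real.sqrt (2 * Real.pi))⁻¹ := by
  have hS0 : (0:ℝ) ≤ (Real.sqrt (2 * Real.pi))⁻¹ := by positivity
  rw [abs_mul, abs_of_nonneg (phiPdf_nonneg _)]
  have hb : |x| ≤ |x + c| + |c| := by
    calc |x| = |(x + c) + (-c)| := by ring_nf
      _ ≤ |x + c| + |(-c)| := abs_add_le _ _
      _ = |x + c| + |c| := by rw [abs_neg]
  calc |x| * phiPdf (x + c) ≤ (|x + c| + |c|) * phiPdf (x + c) :=
        mul_le_mul_of_nonneg_right hb (phiPdf_nonneg _)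
    _ = |x + c| * Real.exp (-((x + c) ^ 2) / 2) * (Real.sqrt (2 * Real.pi))⁻¹
        + |c| * phiPdf (x + c) := by rw [phiPdf_def]; ring
    _ ≤ 1 * (Real.sqrt (2 * Real.pi))⁻¹ + |c| * (Real.sqrt (2 * Real.pi))⁻¹ := by
        refine add_le_add (mul_le_mul_of_nonneg_right (abs_mul_exp_le _) hS0) ?_
        exact mul_le_mul_of_nonneg_left (phiPdf_le _) (abs_nonneg c)
    _ = (1 + |c|) * (Real.sqrt (2 * Real.pi))⁻¹ := by ring

lemma sq_mul_phiPdf_le (x c : ℝ) :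
    x ^ 2 * phiPdf (x + c) ≤ (4 + 2 * c ^ 2) * (Real.sqrt (2 * Real.pi))⁻¹ := by
  have hS0 : (0:ℝ) ≤ (Real.sqrt (2 * Real.pi))⁻¹ := by positivity
  have hb : x ^ 2 ≤ 2 * (x + c) ^ 2 + 2 * c ^ 2 := by nlinarith [sq_nonneg (x + 2 * c)]
  calc x ^ 2 * phiPdf (x + c) ≤ (2 * (x + c) ^ 2 + 2 * c ^ 2) * phiPdf (x + c) :=
        mul_le_mul_of_nonneg_right hb (phiPdf_nonneg _)
    _ = 2 * ((x + c) ^ 2 * Real.exp (-((x + c) ^ 2) / 2)) * (Real.sqrt (2 * Real.pi))⁻¹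
        + 2 * c ^ 2 * phiPdf (x + c) := by rw [phiPdf_def]; ring
    _ ≤ 2 * 2 * (Real.sqrt (2 * Real.pi))⁻¹ + 2 * c ^ 2 * (Real.sqrt (2 * Real.pi))⁻¹ := by
        refine add_le_add (mul_le_mul_of_nonneg_right ?_ hS0) ?_
        · linarith [sq_mul_exp_le (x + c)]
        · exact mul_le_mul_of_nonneg_left (phiPdf_le _) (by positivity)
    _ = (4 + 2 * c ^ 2) * (Real.sqrt (2 * Real.pi))⁻¹ := by ring

end AuxProofs


/-- as `m → ∞`, `q_m(γ)` converges to
`−dφ(d+γ) − dφ(d−γ) + Φ(d−γ) − Φ(−d−γ)` and `h_m(γ)` converges to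
`d²φ(d+γ) − d²φ(d−γ)`, where `d = Φ⁻¹(1 − α̃/2)`. -/
theorem qm_hm_tendsto (αt : ℝ) (hαt : αt ∈ Ioo (0 : ℝ) 1) (γ : ℝ)
    (dm : ℕ → ℝ) (hdm : ∀ m : ℕ, 0 < m → IsTQuantile m αt (dm m))
    (d : ℝ) (hd : PhiCdf d = 1 - αt / 2) :
    Tendsto (fun m => qm m (dm m) γ) atTop
      (nhds (-d * phiPdf (d + γ) - d * phiPdf (d - γ) + PhiCdf (d - γ) - PhiCdf (-d - γ))) ∧
    Tendsto (fun m => hm m (dm m) γ) atTop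
      (nhds (d ^ 2 * phiPdf (d + γ) - d ^ 2 * phiPdf (d - γ))) := by
  have htd : Tendsto dm atTop (nhds d) := tendsto_dm αt dm hdm d hd
  constructor
  · -- convergence of q_m
    have hcont : Continuous (fun x : ℝ =>
        -x * phiPdf (x + γ) - x * phiPdf (x - γ) + PhiCdf (x - γ) - PhiCdf (-x - γ)) := by
      fun_prop
    have hbd : ∀ x : ℝ,
        |(-x * phiPdf (x + γ) - x * phiPdf (x - γ) + PhiCdf (x - γ) - PhiCdf (-x - γ))|
          ≤ 2 * ((1 + |γ|) * (Real.sqrt (2 * Real.pi))⁻¹) + 2 := by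
      intro x
      have h1 := abs_mul_phiPdf_le x γ
      have h2 : |x * phiPdf (x - γ)| ≤ (1 + |γ|) * (Real.sqrt (2 * Real.pi))⁻¹ := by
        have h := abs_mul_phiPdf_le x (-γ)
        rw [abs_neg] at h
        rw [show x - γ = x + (-γ) by ring]
        exact h
      have h3 := PhiCdf_nonneg (x - γ)
      have h3' := PhiCdf_le_one (x - γ)
      have h4 := PhiCdf_nonneg (-x - γ)
      have h4' := PhiCdf_le_one (-x - γ)
      have e : -x * phiPdf (x + γ) - x * phiPdf (x - γ) + PhiCdf (x - γ) - PhiCdf (-x - γ)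
          = (-(x * phiPdf (x + γ)) + -(x * phiPdf (x - γ)))
            + (PhiCdf (x - γ) + -(PhiCdf (-x - γ))) := by ring
      rw [e]
      have a1 := abs_add_le (-(x * phiPdf (x + γ)) + -(x * phiPdf (x - γ)))
        (PhiCdf (x - γ) + -(PhiCdf (-x - γ)))
      have a2 := abs_add_le (-(x * phiPdf (x + γ))) (-(x * phiPdf (x - γ)))
      have a3 := abs_add_le (PhiCdf (x - γ)) (-(PhiCdf (-x - γ)))
      rw [abs_neg, abs_neg] at a2
      rw [abs_neg] at a3
      have b3 : |PhiCdf (x - γ)| ≤ 1 := abs_le.2 ⟨by linarith, h3'⟩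
      have b4 : |PhiCdf (-x - γ)| ≤ 1 := abs_le.2 ⟨by linarith, h4'⟩
      linarith
    have h := tendsto_integral_G _ hcont _ hbd dm d htd
    exact h.congr fun m => rfl
  · -- convergence of h_m
    have hcont : Continuous (fun x : ℝ =>
        x ^ 2 * phiPdf (x + γ) - x ^ 2 * phiPdf (x - γ)) := by
      fun_prop
    have hbd : ∀ x : ℝ,
        |(x ^ 2 * phiPdf (x + γ) - x ^ 2 * phiPdf (x - γ))|
          ≤ 2 * ((4 + 2 * γ ^ 2) * (Real.sqrt (2 * Real.pi))⁻¹) := by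
      intro x
      have h1 := sq_mul_phiPdf_le x γ
      have h2 : x ^ 2 * phiPdf (x - γ) ≤ (4 + 2 * γ ^ 2) * (Real.sqrt (2 * Real.pi))⁻¹ := by
        have h := sq_mul_phiPdf_le x (-γ)
        rw [show x + (-γ) = x - γ by ring, show (-γ) ^ 2 = γ ^ 2 by ring] at h
        exact h
      have h5 : 0 ≤ x ^ 2 * phiPdf (x + γ) := mul_nonneg (sq_nonneg x) (phiPdf_nonneg _)
      have h6 : 0 ≤ x ^ 2 * phiPdf (x - γ) := mul_nonneg (sq_nonneg x) (phiPdf_nonneg _)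
      have h7 := abs_sub (x ^ 2 * phiPdf (x + γ)) (x ^ 2 * phiPdf (x - γ))
      rw [abs_of_nonneg h5, abs_of_nonneg h6] at h7
      linarith
    have h := tendsto_integral_G _ hcont _ hbd dm d htd
    exact h.congr fun m => rfl
end
end
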